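/- Let x₁,…,x_N ∈ ℝ^p and let c ∈ ℝ^p be a nonzero vector lying in the span of {x₁,…,x_N}. Let E = conv({x₁,…,x_N} ∪ {−x₁,…,−x_N}) be the Elfving set, and let t* = max{t ≥ 0 : t·c ∈ E}, so that 0 < t* < ∞ and x_c := t*·c ∈ ∂E. Suppose v ∈ ℝ^N satisfies x_c = Σ_i v_i x_i with Σ_i |v_i| = 1, and define w*_i = |v_i|. Then w* is a probability vector, c lies in the range of Σ_{w*}, and for every probability vector w ∈ ℝ^N such that c lies in the range of Σ_w, one has cᵀ(Σ_{w*})⁺c ≤ cᵀ(Σ_w)⁺c; moreover cᵀ(Σ_{w*})⁺c = 1/(t*)². -/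

import Mathlib

open Matrix Finset

open scoped Classical in
/-- The Moore–Penrose pseudo-inverse of a real matrix, defined (via choice) as the
unique matrix satisfying the four Penrose conditions. -/
noncomputable def penroseInv {m n : ℕ} (A : Matrix (Fin m) (Fin n) ℝ) :
    Matrix (Fin n) (Fin m) ℝ :=
  if h : ∃ B : Matrix (Fin n) (Fin m) ℝ,
      A * B * A = A ∧ B * A * B = B ∧ (A * B)ᵀ = A * B ∧ (B * A)ᵀ = B * A
  then h.choose else 0

/-- The design covariance matrix `Σ_w = Σᵢ wᵢ xᵢ xᵢᵀ`. -/
noncomputable def covMatrix {N p : ℕ} (w : Fin N → ℝ) (x : Fin N → Fin p → ℝ) :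
    Matrix (Fin p) (Fin p) ℝ :=
  ∑ i, w i • Matrix.vecMulVec (x i) (x i)

/- ## Auxiliary lemmas -/

theorem sym_penrose_exists {n : ℕ} (A : Matrix (Fin n) (Fin n) ℝ) (hsym : Aᵀ = A) :
    ∃ B : Matrix (Fin n) (Fin n) ℝ,
      A * B * A = A ∧ B * A * B = B ∧ (A * B)ᵀ = A * B ∧ (B * A)ᵀ = B * A := by
  have hA : A.IsHermitian := by
    rw [Matrix.IsHermitian, conjTranspose_eq_transpose_of_trivial]
    exact hsym
  classical
  set U : Matrix (Fin n) (Fin n) ℝ := (hA.eigenvectorUnitary : Matrix (Fin n) (Fin n) ℝ) with hU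
  have hUU : star U * U = 1 := Unitary.coe_star_mul_self _
  set D : Matrix (Fin n) (Fin n) ℝ := diagonal (RCLike.ofReal ∘ hA.eigenvalues) with hD
  set D' : Matrix (Fin n) (Fin n) ℝ :=
    diagonal (fun i => if hA.eigenvalues i = 0 then 0 else (hA.eigenvalues i)⁻¹) with hD'
  have hspec : A = U * D * star U := hA.spectral_theorem
  have key : ∀ M N : Matrix (Fin n) (Fin n) ℝ,
      (U * M * star U) * (U * N * star U) = U * (M * N) * star U := by
    intro M N
    simp only [Matrix.mul_assoc]
    rw [← Matrix.mul_assoc (star U) U (N * star U), hUU, Matrix.one_mul]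
  have hstar : star U = Uᵀ := by
    rw [Matrix.star_eq_conjTranspose, conjTranspose_eq_transpose_of_trivial]
  have hDDD : D * D' * D = D := by
    rw [hD, hD', diagonal_mul_diagonal, diagonal_mul_diagonal]
    refine congrArg diagonal ?_
    funext i
    by_cases h : hA.eigenvalues i = 0
    · simp [h]
    · simp [h, Function.comp]
  have hD'D' : D' * D * D' = D' := by
    rw [hD, hD', diagonal_mul_diagonal, diagonal_mul_diagonal]
    refine congrArg diagonal ?_
    funext i
    by_cases h : hA.eigenvalues i = 0
    · simp [h]
    · simp [h, Function.comp]
  have tkey : ∀ M : Matrix (Fin n) (Fin n) ℝ, Mᵀ = M → (U * M * star U)ᵀ = U * M * star U := by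
    intro M hM
    rw [hstar, Matrix.transpose_mul, Matrix.transpose_mul, Matrix.transpose_transpose, hM,
      Matrix.mul_assoc]
  refine ⟨U * D' * star U, ?_, ?_, ?_, ?_⟩
  · rw [hspec, key, key, hDDD]
  · rw [hspec, key, key, hD'D']
  · rw [hspec, key]
    refine tkey _ ?_
    rw [hD, hD', diagonal_mul_diagonal, diagonal_transpose]
  · rw [hspec, key]
    refine tkey _ ?_
    rw [hD, hD', diagonal_mul_diagonal, diagonal_transpose]

lemma penroseInv_spec {n : ℕ} (A : Matrix (Fin n) (Fin n) ℝ) (hsym : Aᵀ = A) :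
    A * penroseInv A * A = A ∧ penroseInv A * A * penroseInv A = penroseInv A ∧
    (A * penroseInv A)ᵀ = A * penroseInv A ∧ (penroseInv A * A)ᵀ = penroseInv A * A := by
  classical
  have h := sym_penrose_exists A hsym
  rw [penroseInv, dif_pos h]
  exact h.choose_spec

lemma symm_dot' {n : ℕ} {A : Matrix (Fin n) (Fin n) ℝ} (h : Aᵀ = A) (y w : Fin n → ℝ) :
    (A *ᵥ y) ⬝ᵥ w = y ⬝ᵥ (A *ᵥ w) :=
  calc (A *ᵥ y) ⬝ᵥ w = (y ᵥ* Aᵀ) ⬝ᵥ w := by rw [vecMul_transpose]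
    _ = (y ᵥ* A) ⬝ᵥ w := by rw [h]
    _ = y ⬝ᵥ (A *ᵥ w) := (dotProduct_mulVec _ _ _).symm

lemma covMatrix_transpose {N p : ℕ} (w : Fin N → ℝ) (x : Fin N → Fin p → ℝ) :
    (covMatrix w x)ᵀ = covMatrix w x := by
  ext a b
  simp [covMatrix, Matrix.sum_apply, vecMulVec_apply, mul_comm]

lemma covMatrix_mulVec {N p : ℕ} (w : Fin N → ℝ) (x : Fin N → Fin p → ℝ) (d : Fin p → ℝ) :
    covMatrix w x *ᵥ d = ∑ i, (w i * (x i ⬝ᵥ d)) • x i := by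
  ext j
  simp only [covMatrix, mulVec, dotProduct, Finset.sum_apply, Matrix.sum_apply,
    Pi.smul_apply, Matrix.smul_apply, smul_eq_mul, vecMulVec_apply]
  simp only [Finset.sum_mul, Finset.mul_sum]
  rw [Finset.sum_comm]
  exact Finset.sum_congr rfl fun i _ => Finset.sum_congr rfl fun k _ => by ring

lemma covMatrix_quad {N p : ℕ} (w : Fin N → ℝ) (x : Fin N → Fin p → ℝ) (a b : Fin p → ℝ) :
    a ⬝ᵥ covMatrix w x *ᵥ b = ∑ i, w i * (x i ⬝ᵥ a) * (x i ⬝ᵥ b) := by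
  rw [covMatrix_mulVec]
  simp only [dotProduct, Finset.sum_apply, Pi.smul_apply, smul_eq_mul]
  simp only [Finset.mul_sum, Finset.sum_mul]
  rw [Finset.sum_comm]
  refine Finset.sum_congr rfl fun i _ => ?_
  rw [Finset.sum_comm]
  exact Finset.sum_congr rfl fun k _ => Finset.sum_congr rfl fun l _ => by ring

lemma dot_sum_smul {N p : ℕ} (d : Fin p → ℝ) (a : Fin N → ℝ) (x : Fin N → Fin p → ℝ) :
    d ⬝ᵥ (∑ i, a i • x i) = ∑ i, a i * (d ⬝ᵥ x i) := by
  simp only [dotProduct, Finset.sum_apply, Pi.smul_apply, smul_eq_mul, Finset.mul_sum]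
  rw [Finset.sum_comm]
  exact Finset.sum_congr rfl fun i _ => Finset.sum_congr rfl fun j _ => by ring

lemma exists_support {N p : ℕ} (x : Fin N → Fin p → ℝ) (c : Fin p → ℝ)
    (hc0 : c ≠ 0) (a : Fin N → ℝ) (hc : ∑ i, a i • x i = c)
    (E : Set (Fin p → ℝ))
    (hE : E = convexHull ℝ (Set.range x ∪ Set.range (fun i => -x i)))
    (tstar : ℝ) (htpos : 0 < tstar)
    (htmax : IsGreatest {t : ℝ | 0 ≤ t ∧ t • c ∈ E} tstar)
    (v : Fin N → ℝ)
    (hvrep : ∑ i, v i • x i = tstar • c)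
    (hv1 : ∑ i, |v i| = 1) :
    ∃ d : Fin p → ℝ, (∀ i, |d ⬝ᵥ x i| ≤ 1) ∧ d ⬝ᵥ c = 1 / tstar := by
  classical
  -- N is positive
  have hNpos : 0 < N := by
    rcases Nat.eq_zero_or_pos N with h | h
    · subst h; simp at hc; exact absurd hc.symm hc0
    · exact h
  haveI : Nonempty (Fin N) := ⟨⟨0, hNpos⟩⟩
  -- basic facts about E
  have hSfin : (Set.range x ∪ Set.range (fun i => -x i)).Finite :=
    (Set.finite_range x).union (Set.finite_range _)
  have hEcomp : IsCompact E := hE ▸ hSfin.isCompact_convexHull ℝ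
  have hEconv : Convex ℝ E := hE ▸ convex_convexHull ℝ _
  have hxE : ∀ i, x i ∈ E := fun i =>
    hE ▸ subset_convexHull ℝ _ (Or.inl ⟨i, rfl⟩)
  have hxE' : ∀ i, -x i ∈ E := fun i =>
    hE ▸ subset_convexHull ℝ _ (Or.inr ⟨i, rfl⟩)
  -- upper bound for admissible d
  have hub : ∀ d : Fin p → ℝ, (∀ i, |d ⬝ᵥ x i| ≤ 1) → d ⬝ᵥ c ≤ 1 / tstar := by
    intro d hd
    have h1 : d ⬝ᵥ (tstar • c) = ∑ i, v i * (d ⬝ᵥ x i) := by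
      rw [← hvrep, dot_sum_smul]
    have h2 : ∑ i, v i * (d ⬝ᵥ x i) ≤ 1 := by
      rw [← hv1]
      refine Finset.sum_le_sum fun i _ => ?_
      calc v i * (d ⬝ᵥ x i) ≤ |v i * (d ⬝ᵥ x i)| := le_abs_self _
        _ = |v i| * |d ⬝ᵥ x i| := abs_mul _ _
        _ ≤ |v i| * 1 := mul_le_mul_of_nonneg_left (hd i) (abs_nonneg _)
        _ = |v i| := mul_one _
    have h3 : tstar * (d ⬝ᵥ c) ≤ 1 := by
      calc tstar * (d ⬝ᵥ c) = d ⬝ᵥ (tstar • c) := by rw [dotProduct_smul]; simp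
        _ = ∑ i, v i * (d ⬝ᵥ x i) := h1
        _ ≤ 1 := h2
    rw [le_div_iff₀ htpos]
    linarith [h3]
  -- lower bound: for every s > tstar there is an admissible d with 1/s < d ⬝ᵥ c
  have hlb : ∀ s : ℝ, tstar < s → ∃ d : Fin p → ℝ, (∀ i, |d ⬝ᵥ x i| ≤ 1) ∧ 1 / s < d ⬝ᵥ c := by
    intro s hs
    have hsc : s • c ∉ E := by
      intro hmem
      exact absurd (htmax.2 ⟨le_of_lt (htpos.trans hs), hmem⟩) (not_le.mpr hs)
    obtain ⟨f, u, hfu, hufx⟩ :=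
      geometric_hahn_banach_closed_point hEconv hEcomp.isClosed hsc
    set g : Fin p → ℝ := fun j => f (Pi.single j 1) with hg
    have hfg : ∀ y : Fin p → ℝ, f y = g ⬝ᵥ y := by
      intro y
      have hy : y = ∑ j, y j • (Pi.single j (1:ℝ) : Fin p → ℝ) := by
        ext k
        simp [Pi.single_apply]
      calc f y = f (∑ j, y j • (Pi.single j (1:ℝ) : Fin p → ℝ)) := by rw [← hy]
        _ = ∑ j, y j • f (Pi.single j (1:ℝ) : Fin p → ℝ) := by rw [map_sum]; simp
        _ = g ⬝ᵥ y := by simp [dotProduct, hg, smul_eq_mul, mul_comm]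
    have hgc : g ⬝ᵥ c = ∑ i, a i * (g ⬝ᵥ x i) := by rw [← hc, dot_sum_smul]
    obtain ⟨i₀, -, hi₀⟩ := Finset.exists_max_image Finset.univ (fun i => |g ⬝ᵥ x i|)
      ⟨⟨0, hNpos⟩, Finset.mem_univ _⟩
    set m : ℝ := |g ⬝ᵥ x i₀| with hm
    have hm0 : 0 ≤ m := abs_nonneg _
    rcases eq_or_lt_of_le hm0 with hmz | hmpos
    · -- m = 0 : contradiction
      exfalso
      have hall : ∀ i, g ⬝ᵥ x i = 0 := fun i => abs_eq_zero.mp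
        (le_antisymm (by simpa [← hmz] using hi₀ i (Finset.mem_univ i)) (abs_nonneg _))
      have hgc0 : g ⬝ᵥ c = 0 := by
        rw [hgc]; exact Finset.sum_eq_zero fun i _ => by rw [hall i, mul_zero]
      have h1 : f (s • c) = 0 := by rw [hfg, dotProduct_smul, hgc0]; simp
      have h2 : f (tstar • c) = 0 := by rw [hfg, dotProduct_smul, hgc0]; simp
      have h3 := hfu _ htmax.1.2
      rw [h2] at h3
      rw [h1] at hufx
      linarith
    · -- m > 0
      refine ⟨m⁻¹ • g, fun i => ?_, ?_⟩
      · rw [smul_dotProduct, smul_eq_mul, abs_mul, abs_inv, abs_of_pos hmpos]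
        rw [inv_mul_le_iff₀ hmpos, mul_one]
        exact hi₀ i (Finset.mem_univ i)
      · have hmu : m < u := by
          have h1 := hfu _ (hxE i₀)
          have h2 := hfu _ (hxE' i₀)
          rw [hfg] at h1 h2
          have : g ⬝ᵥ (-x i₀) = -(g ⬝ᵥ x i₀) := by simp
          rw [this] at h2
          rw [hm, abs_lt]
          constructor <;> linarith
        have hufs : u < s * (g ⬝ᵥ c) := by
          have := hufx
          rw [hfg, dotProduct_smul] at this
          simpa using this
        rw [smul_dotProduct, smul_eq_mul]
        rw [div_lt_iff₀ (htpos.trans hs)]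
        have hmc : m < s * (g ⬝ᵥ c) := lt_trans hmu hufs
        calc (1:ℝ) = m⁻¹ * m := by field_simp
          _ < m⁻¹ * (s * (g ⬝ᵥ c)) := by
              exact mul_lt_mul_of_pos_left hmc (inv_pos.mpr hmpos)
          _ = m⁻¹ * (g ⬝ᵥ c) * s := by ring
  -- maximize over the compact set T
  set L : (Fin p → ℝ) →ₗ[ℝ] (Fin N → ℝ) :=
    { toFun := fun d i => d ⬝ᵥ x i
      map_add' := fun d e => by funext i; simp [add_dotProduct]
      map_smul' := fun r d => by funext i; simp [smul_dotProduct] } with hL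
  set T : Set (Fin N → ℝ) :=
    (LinearMap.range L : Set (Fin N → ℝ)) ∩ Set.pi Set.univ (fun _ => Set.Icc (-1:ℝ) 1)
    with hT
  have hTcomp : IsCompact T :=
    IsCompact.inter_left (isCompact_univ_pi fun _ => isCompact_Icc)
      (LinearMap.range L).closed_of_finiteDimensional
  have hT0 : (0 : Fin N → ℝ) ∈ T := by
    constructor
    · exact ⟨0, by funext i; simp [hL]⟩
    · intro i _; exact ⟨by norm_num, by norm_num⟩
  have hcont : Continuous fun u : Fin N → ℝ => ∑ i, a i * u i :=
    continuous_finset_sum _ fun i _ => continuous_const.mul (continuous_apply i)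
  obtain ⟨u, huT, hmax⟩ := hTcomp.exists_isMaxOn ⟨0, hT0⟩ hcont.continuousOn
  obtain ⟨dstar, hds⟩ := huT.1
  have hadm : ∀ i, |dstar ⬝ᵥ x i| ≤ 1 := by
    intro i
    have h := huT.2 i (Set.mem_univ i)
    have hdsu : dstar ⬝ᵥ x i = u i := by rw [← hds]; rfl
    rw [abs_le, hdsu]
    exact ⟨h.1, h.2⟩
  have hdc : dstar ⬝ᵥ c = ∑ i, a i * u i := by
    rw [← hc, dot_sum_smul]
    refine Finset.sum_congr rfl fun i _ => ?_
    have hdsu : dstar ⬝ᵥ x i = u i := by rw [← hds]; rfl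
    rw [hdsu]
  have hMle : dstar ⬝ᵥ c ≤ 1 / tstar := hub dstar hadm
  have hMge : ¬ dstar ⬝ᵥ c < 1 / tstar := by
    intro hlt
    have hM0 : 0 ≤ dstar ⬝ᵥ c := by
      have h0 : ∑ i, a i * (0 : Fin N → ℝ) i ≤ ∑ i, a i * u i := hmax hT0
      simp only [Pi.zero_apply, mul_zero, Finset.sum_const_zero] at h0
      rw [hdc]
      exact h0
    set B : ℝ := (dstar ⬝ᵥ c + 1 / tstar) / 2 with hB
    have htinv : 0 < 1 / tstar := by positivity
    have hB0 : 0 < B := by rw [hB]; linarith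
    have hBlt : B < 1 / tstar := by rw [hB]; linarith
    have hMB : dstar ⬝ᵥ c < B := by rw [hB]; linarith
    have hs : tstar < 1 / B := by
      rw [lt_div_iff₀ hB0]
      have h1 : tstar * B < tstar * (1 / tstar) := mul_lt_mul_of_pos_left hBlt htpos
      have h2 : tstar * (1 / tstar) = 1 := by field_simp
      linarith
    obtain ⟨d, hadm', hd⟩ := hlb (1 / B) hs
    rw [one_div_one_div] at hd
    have hLdT : L d ∈ T := by
      constructor
      · exact ⟨d, rfl⟩
      · intro i _
        have h := hadm' i
        rw [abs_le] at h
        exact ⟨h.1, h.2⟩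
    have hle : ∑ i, a i * (L d) i ≤ ∑ i, a i * u i := hmax hLdT
    have hphi : ∑ i, a i * (L d) i = d ⬝ᵥ c := by
      rw [← hc, dot_sum_smul]
      rfl
    rw [hphi, ← hdc] at hle
    linarith
  exact ⟨dstar, hadm, le_antisymm hMle (not_lt.mp hMge)⟩

/-- For any design `w` and supporting vector `d` with `d ⬝ c ≠ 0` and `dᵀ Σ_w d ≤ 1`,
if `c` is in the range of `Σ_w` then `(d ⬝ c)^2 ≤ cᵀ Σ_w⁺ c`. -/
lemma penrose_lower_bound {N p : ℕ} (w : Fin N → ℝ) (x : Fin N → Fin p → ℝ)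
    (c d : Fin p → ℝ) (hw : ∀ i, 0 ≤ w i) (hw1 : ∑ i, w i = 1)
    (hd : ∀ i, |d ⬝ᵥ x i| ≤ 1)
    (z : Fin p → ℝ) (hz : covMatrix w x *ᵥ z = c) :
    (d ⬝ᵥ c) * (d ⬝ᵥ c) ≤ c ⬝ᵥ (penroseInv (covMatrix w x)) *ᵥ c := by
  classical
  set A := covMatrix w x with hA
  have hAs : Aᵀ = A := covMatrix_transpose w x
  obtain ⟨hP1, hP2, hP3, hP4⟩ := penroseInv_spec A hAs
  set P := penroseInv A with hPdef
  set u : Fin p → ℝ := P *ᵥ c with hu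
  have hAu : A *ᵥ u = c := by
    rw [hu, ← hz, mulVec_mulVec, mulVec_mulVec, hP1]
  have hcPc : c ⬝ᵥ P *ᵥ c = u ⬝ᵥ (A *ᵥ u) := by
    rw [← hu, ← hAu]
    rw [symm_dot' hAs]
  -- quadratic nonneg
  have hq : ∀ y : Fin p → ℝ, y ⬝ᵥ A *ᵥ y = ∑ i, w i * (x i ⬝ᵥ y) * (x i ⬝ᵥ y) :=
    fun y => covMatrix_quad w x y y
  have hpoly : ∀ t : ℝ,
      0 ≤ (u ⬝ᵥ A *ᵥ u) * (t * t) + (2 * (d ⬝ᵥ A *ᵥ u)) * t + d ⬝ᵥ A *ᵥ d := by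
    intro t
    have hnn : 0 ≤ (d + t • u) ⬝ᵥ A *ᵥ (d + t • u) := by
      rw [hq]
      exact Finset.sum_nonneg fun i _ => by
        nlinarith [hw i, mul_self_nonneg (x i ⬝ᵥ (d + t • u))]
    have hexp : (d + t • u) ⬝ᵥ A *ᵥ (d + t • u) =
        (u ⬝ᵥ A *ᵥ u) * (t * t) + (2 * (d ⬝ᵥ A *ᵥ u)) * t + d ⬝ᵥ A *ᵥ d := by
      rw [covMatrix_quad, covMatrix_quad, covMatrix_quad, covMatrix_quad]
      simp only [dotProduct_add, dotProduct_smul, smul_eq_mul]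
      rw [Finset.sum_mul, Finset.mul_sum, Finset.sum_mul, ← Finset.sum_add_distrib,
        ← Finset.sum_add_distrib]
      exact Finset.sum_congr rfl fun i _ => by ring
    linarith [hexp ▸ hnn]
  have hdisc := discrim_le_zero hpoly
  rw [discrim] at hdisc
  have hdAu : d ⬝ᵥ A *ᵥ u = d ⬝ᵥ c := by rw [hAu]
  have hdAd : d ⬝ᵥ A *ᵥ d ≤ 1 := by
    rw [hq]
    calc ∑ i, w i * (x i ⬝ᵥ d) * (x i ⬝ᵥ d) ≤ ∑ i, w i := by
          refine Finset.sum_le_sum fun i _ => ?_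
          have h1 : |x i ⬝ᵥ d| ≤ 1 := by rw [dotProduct_comm]; exact hd i
          have h2 : (x i ⬝ᵥ d) * (x i ⬝ᵥ d) ≤ 1 := by
            have := abs_nonneg (x i ⬝ᵥ d)
            nlinarith [abs_mul_abs_self (x i ⬝ᵥ d)]
          nlinarith [hw i]
      _ = 1 := hw1
  have hqa : 0 ≤ u ⬝ᵥ A *ᵥ u := by
    rw [hq]
    exact Finset.sum_nonneg fun i _ => by nlinarith [hw i, mul_self_nonneg (x i ⬝ᵥ u)]
  rw [hdAu] at hdisc
  rw [hcPc]
  nlinarith [hdisc, hqa, hdAd]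

/-- Elfving's theorem (1952): if `t*·c` is the boundary point of the Elfving set
`E = conv({±xᵢ})` along the direction of `c` (i.e. `t*` is the largest `t ≥ 0` with
`t·c ∈ E`), and `t*·c = Σᵢ vᵢ xᵢ` with `Σᵢ |vᵢ| = 1`, then `w*ᵢ = |vᵢ|` is a
c-optimal design and `cᵀ Σ_{w*}⁺ c = 1/(t*)²`. -/
theorem elfving_theorem
    (N p : ℕ) (x : Fin N → Fin p → ℝ) (c : Fin p → ℝ)
    (hc0 : c ≠ 0) (hcspan : c ∈ Submodule.span ℝ (Set.range x))
    (E : Set (Fin p → ℝ))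
    (hE : E = convexHull ℝ (Set.range x ∪ Set.range (fun i => -x i)))
    (tstar : ℝ) (htpos : 0 < tstar)
    (htmax : IsGreatest {t : ℝ | 0 ≤ t ∧ t • c ∈ E} tstar)
    (v : Fin N → ℝ)
    (hvrep : ∑ i, v i • x i = tstar • c)
    (hv1 : ∑ i, |v i| = 1)
    (wstar : Fin N → ℝ) (hwstar : ∀ i, wstar i = |v i|) :
    ((∀ i, 0 ≤ wstar i) ∧ ∑ i, wstar i = 1) ∧
    (∃ z, (covMatrix wstar x).mulVec z = c) ∧
    (∀ w : Fin N → ℝ, (∀ i, 0 ≤ w i) → ∑ i, w i = 1 →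
      (∃ z, (covMatrix w x).mulVec z = c) →
      c ⬝ᵥ (penroseInv (covMatrix wstar x)).mulVec c ≤
        c ⬝ᵥ (penroseInv (covMatrix w x)).mulVec c) ∧
    (c ⬝ᵥ (penroseInv (covMatrix wstar x)).mulVec c = 1 / tstar ^ 2) := by
  classical
  obtain ⟨a, ha⟩ := (Submodule.mem_span_range_iff_exists_fun ℝ).mp hcspan
  obtain ⟨d, hdadm, hdc⟩ := exists_support x c hc0 a ha E hE tstar htpos htmax v hvrep hv1
  -- probability vector
  have hprob : (∀ i, 0 ≤ wstar i) ∧ ∑ i, wstar i = 1 := by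
    constructor
    · intro i; rw [hwstar i]; exact abs_nonneg _
    · calc ∑ i, wstar i = ∑ i, |v i| := Finset.sum_congr rfl fun i _ => hwstar i
        _ = 1 := hv1
  -- sign condition
  have hsign : ∀ i, v i * (d ⬝ᵥ x i) = |v i| := by
    have hsum : ∑ i, v i * (d ⬝ᵥ x i) = 1 := by
      calc ∑ i, v i * (d ⬝ᵥ x i) = d ⬝ᵥ (∑ i, v i • x i) := (dot_sum_smul d v x).symm
        _ = d ⬝ᵥ (tstar • c) := by rw [hvrep]
        _ = tstar * (d ⬝ᵥ c) := by rw [dotProduct_smul]; simp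
        _ = 1 := by rw [hdc]; field_simp
    have hle : ∀ i ∈ Finset.univ, v i * (d ⬝ᵥ x i) ≤ |v i| := by
      intro i _
      calc v i * (d ⬝ᵥ x i) ≤ |v i * (d ⬝ᵥ x i)| := le_abs_self _
        _ = |v i| * |d ⬝ᵥ x i| := abs_mul _ _
        _ ≤ |v i| * 1 := mul_le_mul_of_nonneg_left (hdadm i) (abs_nonneg _)
        _ = |v i| := mul_one _
    have heq := (Finset.sum_eq_sum_iff_of_le hle).mp (by rw [hsum, hv1])
    exact fun i => heq i (Finset.mem_univ i)
  -- key identity : Σ_{w*} d = tstar • c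
  have hSigd : covMatrix wstar x *ᵥ d = tstar • c := by
    rw [covMatrix_mulVec, ← hvrep]
    refine Finset.sum_congr rfl fun i _ => ?_
    congr 1
    rw [hwstar i, dotProduct_comm]
    by_cases h : v i = 0
    · simp [h]
    · have h1 := hsign i
      have h2 : d ⬝ᵥ x i = |v i| / v i := by
        field_simp
        linarith [h1]
      rw [h2, ← mul_div_assoc, abs_mul_abs_self, mul_div_assoc, div_self h, mul_one]
  set z : Fin p → ℝ := tstar⁻¹ • d with hzdef
  have hz : covMatrix wstar x *ᵥ z = c := by
    rw [hzdef, mulVec_smul, hSigd, smul_smul, inv_mul_cancel₀ (ne_of_gt htpos), one_smul]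
  -- value at wstar
  have hval : c ⬝ᵥ (penroseInv (covMatrix wstar x)) *ᵥ c = 1 / tstar ^ 2 := by
    set A := covMatrix wstar x with hA
    have hAs : Aᵀ = A := covMatrix_transpose wstar x
    obtain ⟨hP1, _, _, _⟩ := penroseInv_spec A hAs
    set P := penroseInv A with hP
    calc c ⬝ᵥ P *ᵥ c = (A *ᵥ z) ⬝ᵥ (P *ᵥ (A *ᵥ z)) := by rw [hz]
      _ = z ⬝ᵥ (A *ᵥ (P *ᵥ (A *ᵥ z))) := symm_dot' hAs _ _
      _ = z ⬝ᵥ ((A * P * A) *ᵥ z) := by rw [mulVec_mulVec, mulVec_mulVec, Matrix.mul_assoc]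
      _ = z ⬝ᵥ (A *ᵥ z) := by rw [hP1]
      _ = z ⬝ᵥ c := by rw [hz]
      _ = tstar⁻¹ * (d ⬝ᵥ c) := by rw [hzdef, smul_dotProduct]; simp
      _ = 1 / tstar ^ 2 := by rw [hdc]; field_simp
  refine ⟨hprob, ⟨z, hz⟩, ?_, hval⟩
  intro w hw hw1 ⟨zw, hzw⟩
  have hlow := penrose_lower_bound w x c d hw hw1 hdadm zw hzw
  rw [hdc] at hlow
  rw [hval]
  calc 1 / tstar ^ 2 = (1 / tstar) * (1 / tstar) := by ring
    _ ≤ c ⬝ᵥ (penroseInv (covMatrix w x)) *ᵥ c := hlow
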